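/- arXiv:1212.1400 — 4 statements merged into one kernel-verified Lean document; each statement's English description precedes it below -/
import Mathlib

section
/- Let s ∈ {−1, 1} and let α₁, α₂ ∈ ℂ satisfy Re(α₁) < 1, Re(α₂) < 1, α₁ + α₂ ∉ ℤ, α₁ ∉ ℤ and α₂ ∉ ℤ. Then ε_s(α₁ − 2, α₂) = (2(α₁ − 2)(α₁ − 1)/(3 − α₁ − α₂)) · ε_s(α₁, α₂). (In particular this recursion holds for both the Dirichlet coefficient ε_D = ε_{−1} and the Robin coefficient ε_R = ε_{+1}.) -/
/-!
Replacing `α₁` by `α₁ - 2` shifts every Gamma argument in `ε_s` by an integer, so the functional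
equation `Γ(z + 1) = z Γ(z)` expresses each shifted factor as a polynomial times the unshifted one.
In both summands of `ε_s` these polynomials combine to the same factor
`2 (α₁ - 2)(α₁ - 1) / (3 - α₁ - α₂)`. Only polynomial factors are cancelled, so no Gamma value
needs to be nonzero.
-/

noncomputable section

/-- The leading boundary heat content coefficient `ε_{s,α₁,α₂}` of Lemma 1.6;
`s = -1` gives the Dirichlet coefficient and `s = 1` the Robin coefficient. -/
def heatEps (s α₁ α₂ : ℂ) : ℂ :=
  s * (2 : ℂ) ^ (-α₁ - α₂) * (Real.pi : ℂ) ^ (-(1 / 2) : ℂ) *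
      Complex.Gamma ((2 - α₁ - α₂) / 2) *
      (Complex.Gamma (1 - α₁) * Complex.Gamma (1 - α₂) / Complex.Gamma (2 - α₁ - α₂)) +
    (2 : ℂ) ^ (-α₁ - α₂) * (Real.pi : ℂ) ^ (-(1 / 2) : ℂ) *
      Complex.Gamma ((2 - α₁ - α₂) / 2) * Complex.Gamma (α₁ + α₂ - 1) *
      (Complex.Gamma (1 - α₁) / Complex.Gamma α₂ + Complex.Gamma (1 - α₂) / Complex.Gamma α₁)

theorem Complex.Gamma_add_two {z : ℂ} (h0 : z ≠ 0) (h1 : z + 1 ≠ 0) :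
    Complex.Gamma (z + 2) = (z + 1) * z * Complex.Gamma z := by
  rw [show z + 2 = z + 1 + 1 by ring, Complex.Gamma_add_one _ h1, Complex.Gamma_add_one _ h0,
    mul_assoc]

open Complex in
theorem heatEps_sub_two_left (s : ℂ) {α₁ α₂ : ℂ} (hα₁₁ : α₁ ≠ 1) (hα₁₂ : α₁ ≠ 2)
    (hsum₂ : α₁ + α₂ ≠ 2) (hsum₃ : α₁ + α₂ ≠ 3) :
    heatEps s (α₁ - 2) α₂ =
      2 * (α₁ - 2) * (α₁ - 1) / (3 - α₁ - α₂) * heatEps s α₁ α₂ := by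
  have hsub₂ : 2 - α₁ - α₂ ≠ 0 := by rw [sub_sub]; exact sub_ne_zero.2 (Ne.symm hsum₂)
  have hsub₃ : 3 - α₁ - α₂ ≠ 0 := by rw [sub_sub]; exact sub_ne_zero.2 (Ne.symm hsum₃)
  have hpow : (2 : ℂ) ^ (-(α₁ - 2) - α₂) = 4 * 2 ^ (-α₁ - α₂) := by
    rw [show -(α₁ - 2) - α₂ = -α₁ - α₂ + (2 : ℕ) by push_cast; ring,
      cpow_add _ _ two_ne_zero, cpow_natCast]
    ring
  have hΓhalf :
      Gamma ((2 - (α₁ - 2) - α₂) / 2) = (2 - α₁ - α₂) / 2 * Gamma ((2 - α₁ - α₂) / 2) := by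
    rw [← Gamma_add_one _ (div_ne_zero hsub₂ two_ne_zero)]
    ring_nf
  have hΓ₁ : Gamma (1 - (α₁ - 2)) = (2 - α₁) * (1 - α₁) * Gamma (1 - α₁) := by
    rw [show 1 - (α₁ - 2) = 1 - α₁ + 2 by ring, Gamma_add_two (by grind) (by grind)]
    ring
  have hΓden :
      Gamma (2 - (α₁ - 2) - α₂) = (3 - α₁ - α₂) * (2 - α₁ - α₂) * Gamma (2 - α₁ - α₂) := by
    rw [show 2 - (α₁ - 2) - α₂ = 2 - α₁ - α₂ + 2 by ring, Gamma_add_two hsub₂ (by grind)]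
    ring
  have hΓsum :
      Gamma (α₁ + α₂ - 1) = (α₁ + α₂ - 2) * (α₁ + α₂ - 3) * Gamma (α₁ - 2 + α₂ - 1) := by
    rw [show α₁ + α₂ - 1 = α₁ - 2 + α₂ - 1 + 2 by ring, Gamma_add_two (by grind) (by grind)]
    ring_nf
  have hΓα₁ : Gamma α₁ = (α₁ - 1) * (α₁ - 2) * Gamma (α₁ - 2) := by
    rw [show α₁ = α₁ - 2 + 2 by ring, Gamma_add_two (by grind) (by grind)]
    ring_nf
  unfold heatEps
  rw [hpow, hΓhalf, hΓ₁, hΓden, hΓsum, hΓα₁]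
  field_simp
  ring

theorem eps_recursion_first_index_general (s α₁ α₂ : ℂ)
    (h12 : ∀ n : ℤ, α₁ + α₂ ≠ (n : ℂ))
    (hα₁ : ∀ n : ℤ, α₁ ≠ (n : ℂ)) :
    heatEps s (α₁ - 2) α₂ =
      2 * (α₁ - 2) * (α₁ - 1) / (3 - α₁ - α₂) * heatEps s α₁ α₂ :=
  heatEps_sub_two_left s (by exact_mod_cast hα₁ 1) (by exact_mod_cast hα₁ 2)
    (by exact_mod_cast h12 2) (by exact_mod_cast h12 3)

theorem eps_recursion_first_index (s α₁ α₂ : ℂ) (hs : s = -1 ∨ s = 1)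
    (h1 : α₁.re < 1) (h2 : α₂.re < 1)
    (h12 : ∀ n : ℤ, α₁ + α₂ ≠ (n : ℂ))
    (hα₁ : ∀ n : ℤ, α₁ ≠ (n : ℂ)) (hα₂ : ∀ n : ℤ, α₂ ≠ (n : ℂ)) :
    heatEps s (α₁ - 2) α₂ =
      2 * (α₁ - 2) * (α₁ - 1) / (3 - α₁ - α₂) * heatEps s α₁ α₂ :=
  eps_recursion_first_index_general s α₁ α₂ h12 hα₁
end
end

section
/- Let s ∈ {−1, 1} and let α₁, α₂ ∈ ℂ satisfy Re(α₁) < 1, Re(α₂) < 1, α₁ + α₂ ∉ ℤ, α₁ ∉ ℤ and α₂ ∉ ℤ. Then ε_s(α₁, α₂ − 2) = (2(α₂ − 2)(α₂ − 1)/(3 − α₁ − α₂)) · ε_s(α₁, α₂). (In particular this recursion holds for both the Dirichlet coefficient ε_D = ε_{−1} and the Robin coefficient ε_R = ε_{+1}.) -/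
noncomputable section

/-!
Write `ε_s(a, b) = P(a, b) · B_s(a, b)` with `P(a, b) = 2^(-a-b) π^(-1/2) Γ((2-a-b)/2)`.
Applying `Γ(z + 1) = z Γ(z)` to each Gamma factor shows that replacing `b` by `b - 2`
multiplies `P` by `2(2-a-b)` and both summands of `B_s` by the same factor
`(b-1)(b-2) / ((2-a-b)(3-a-b))`; the product of the two factors is the claimed one.
-/

open Complex

theorem Complex.Gamma_add_two_s1 {z : ℂ} (h₀ : z ≠ 0) (h₁ : z + 1 ≠ 0) :
    Gamma (z + 2) = (z + 1) * z * Gamma z := by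
  rw [show z + 2 = z + 1 + 1 by ring, Gamma_add_one _ h₁, Gamma_add_one _ h₀, mul_assoc]

def heatEpsPrefactor (a b : ℂ) : ℂ :=
  (2 : ℂ) ^ (-a - b) * (Real.pi : ℂ) ^ (-(1 / 2) : ℂ) * Gamma ((2 - a - b) / 2)

def heatEpsBracket (s a b : ℂ) : ℂ :=
  s * (Gamma (1 - a) * Gamma (1 - b) / Gamma (2 - a - b)) +
    Gamma (a + b - 1) * (Gamma (1 - a) / Gamma b + Gamma (1 - b) / Gamma a)

theorem heatEps_eq_prefactor_mul_bracket (s a b : ℂ) :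
    heatEps s a b = heatEpsPrefactor a b * heatEpsBracket s a b := by
  unfold heatEps heatEpsPrefactor heatEpsBracket
  ring

theorem sub_sub_ne_zero_of_add_ne {G : Type*} [AddCommGroup G] {a b c : G}
    (h : a + b ≠ c) : c - a - b ≠ 0 := by
  rw [sub_sub]
  exact sub_ne_zero.2 h.symm

theorem heatEpsPrefactor_sub_two {a b : ℂ} (h : a + b ≠ 2) :
    heatEpsPrefactor a (b - 2) = 2 * (2 - a - b) * heatEpsPrefactor a b := by
  have hpow : (2 : ℂ) ^ (-a - (b - 2)) = 4 * (2 : ℂ) ^ (-a - b) := by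
    rw [show -a - (b - 2) = -a - b + 2 by ring, cpow_add _ _ two_ne_zero, mul_comm]
    norm_num
  have hGamma : Gamma ((2 - a - (b - 2)) / 2) = (2 - a - b) / 2 * Gamma ((2 - a - b) / 2) := by
    rw [show (2 - a - (b - 2)) / 2 = (2 - a - b) / 2 + 1 by ring,
      Gamma_add_one _ (div_ne_zero (sub_sub_ne_zero_of_add_ne h) two_ne_zero)]
  unfold heatEpsPrefactor
  rw [hpow, hGamma]
  ring

theorem heatEpsBracket_sub_two (s : ℂ) {a b : ℂ} (hb₁ : b ≠ 1) (hb₂ : b ≠ 2)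
    (hab₂ : a + b ≠ 2) (hab₃ : a + b ≠ 3) :
    heatEpsBracket s a (b - 2) =
      (b - 1) * (b - 2) / ((2 - a - b) * (3 - a - b)) * heatEpsBracket s a b := by
  have hb₁' : b - 1 ≠ 0 := sub_ne_zero.2 hb₁
  have hb₂' : b - 2 ≠ 0 := sub_ne_zero.2 hb₂
  have hab₂' : 2 - a - b ≠ 0 := sub_sub_ne_zero_of_add_ne hab₂
  have hab₃' : 3 - a - b ≠ 0 := sub_sub_ne_zero_of_add_ne hab₃
  have hGamma_one_sub : Gamma (1 - (b - 2)) = (2 - b) * (1 - b) * Gamma (1 - b) := by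
    rw [show 1 - (b - 2) = 1 - b + 2 by ring,
      Gamma_add_two_s1 (sub_ne_zero.2 hb₁.symm)
        (by rw [show 1 - b + 1 = 2 - b by ring]; exact sub_ne_zero.2 hb₂.symm)]
    ring
  have hGamma_two_sub :
      Gamma (2 - a - (b - 2)) = (3 - a - b) * (2 - a - b) * Gamma (2 - a - b) := by
    rw [show 2 - a - (b - 2) = 2 - a - b + 2 by ring,
      Gamma_add_two_s1 hab₂' (by rw [show 2 - a - b + 1 = 3 - a - b by ring]; exact hab₃')]
    ring
  have hGamma_add :
      Gamma (a + b - 1) = (a + b - 2) * (a + b - 3) * Gamma (a + (b - 2) - 1) := by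
    rw [show a + b - 1 = a + (b - 2) - 1 + 2 by ring,
      Gamma_add_two_s1 (by rw [show a + (b - 2) - 1 = a + b - 3 by ring]; exact sub_ne_zero.2 hab₃)
        (by rw [show a + (b - 2) - 1 + 1 = a + b - 2 by ring]; exact sub_ne_zero.2 hab₂)]
    ring
  have hGamma_b : Gamma b = (b - 1) * (b - 2) * Gamma (b - 2) := by
    conv_lhs => rw [← sub_add_cancel b 2]
    rw [Gamma_add_two_s1 hb₂' (by rw [show b - 2 + 1 = b - 1 by ring]; exact hb₁')]
    ring
  unfold heatEpsBracket
  rw [hGamma_one_sub, hGamma_two_sub, hGamma_add, hGamma_b]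
  field_simp
  ring

theorem eps_recursion_second_index_general (s α₁ α₂ : ℂ)
    (h12 : ∀ n : ℤ, α₁ + α₂ ≠ (n : ℂ))
    (hα₂ : ∀ n : ℤ, α₂ ≠ (n : ℂ)) :
    heatEps s α₁ (α₂ - 2) =
      2 * (α₂ - 2) * (α₂ - 1) / (3 - α₁ - α₂) * heatEps s α₁ α₂ := by
  have hsum₂ : α₁ + α₂ ≠ 2 := by exact_mod_cast h12 2
  have hsum₃ : α₁ + α₂ ≠ 3 := by exact_mod_cast h12 3
  have hsum₂' := sub_sub_ne_zero_of_add_ne hsum₂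
  have hsum₃' := sub_sub_ne_zero_of_add_ne hsum₃
  rw [heatEps_eq_prefactor_mul_bracket, heatEps_eq_prefactor_mul_bracket,
    heatEpsPrefactor_sub_two hsum₂,
    heatEpsBracket_sub_two s (by exact_mod_cast hα₂ 1) (by exact_mod_cast hα₂ 2) hsum₂ hsum₃]
  field_simp

theorem eps_recursion_second_index (s α₁ α₂ : ℂ) (hs : s = -1 ∨ s = 1)
    (h1 : α₁.re < 1) (h2 : α₂.re < 1)
    (h12 : ∀ n : ℤ, α₁ + α₂ ≠ (n : ℂ))
    (hα₁ : ∀ n : ℤ, α₁ ≠ (n : ℂ)) (hα₂ : ∀ n : ℤ, α₂ ≠ (n : ℂ)) :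
    heatEps s α₁ (α₂ - 2) =
      2 * (α₂ - 2) * (α₂ - 1) / (3 - α₁ - α₂) * heatEps s α₁ α₂ :=
  eps_recursion_second_index_general s α₁ α₂ h12 hα₂
end
end

section
/- Let s ∈ {−1, 1} and let α₁, α₂ ∈ ℂ satisfy Re(α₁) < 1, Re(α₂) < 1, α₁ + α₂ ∉ ℤ, α₁ ∉ ℤ and α₂ ∉ ℤ. Then ε_s(α₁ − 1, α₂ − 1) = −(2(α₁ − 1)(α₂ − 1)/(3 − α₁ − α₂)) · ε_{−s}(α₁, α₂); that is, the recursion that lowers both indices by one interchanges the Dirichlet coefficient ε_D = ε_{−1} and the Robin coefficient ε_R = ε_{+1}. -/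
/-! Both summands of `ε_s` carry the prefactor `2^{-σ} π^{-1/2} Γ((2 - σ)/2)`, `σ = α₁ + α₂`,
which gains the factor `2 (2 - σ)` when `σ` drops by two. Lowering both indices by one turns, via
`Γ(z + 1) = z Γ(z)`, the `s`-summand into `(1 - α₁)(1 - α₂)/((3 - σ)(2 - σ))` times itself and the
other summand into `-(α₁ - 1)(α₂ - 1)/((2 - σ)(3 - σ))` times itself. The two multipliers differ
only in sign, so the recursion rescales both summands by the same factor once `s` is replaced
by `-s`. -/

noncomputable section

open Complex

namespace HeatEps

theorem Gamma_add_two {z : ℂ} (h₀ : z ≠ 0) (h₁ : z + 1 ≠ 0) :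
    Gamma (z + 2) = (z + 1) * z * Gamma z := by
  rw [show z + 2 = z + 1 + 1 by ring, Gamma_add_one _ h₁, Gamma_add_one _ h₀, mul_assoc]

theorem Gamma_eq_sub_one_mul {z : ℂ} (hz : z ≠ 1) : Gamma z = (z - 1) * Gamma (z - 1) := by
  rw [← Gamma_add_one _ (sub_ne_zero.2 hz), sub_add_cancel]

theorem Gamma_one_sub_sub_one {z : ℂ} (hz : z ≠ 1) :
    Gamma (1 - (z - 1)) = (1 - z) * Gamma (1 - z) := by
  rw [show 1 - (z - 1) = 1 - z + 1 by ring, Gamma_add_one _ (sub_ne_zero.2 hz.symm)]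

def prefactor (σ : ℂ) : ℂ :=
  (2 : ℂ) ^ (-σ) * (Real.pi : ℂ) ^ (-(1 / 2) : ℂ) * Gamma ((2 - σ) / 2)

def gammaRatio (α₁ α₂ : ℂ) : ℂ :=
  Gamma (1 - α₁) * Gamma (1 - α₂) / Gamma (2 - α₁ - α₂)

def gammaSum (α₁ α₂ : ℂ) : ℂ :=
  Gamma (α₁ + α₂ - 1) * (Gamma (1 - α₁) / Gamma α₂ + Gamma (1 - α₂) / Gamma α₁)

theorem heatEps_eq (s α₁ α₂ : ℂ) :
    heatEps s α₁ α₂ = prefactor (α₁ + α₂) * (s * gammaRatio α₁ α₂ + gammaSum α₁ α₂) := by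
  simp only [heatEps, prefactor, gammaRatio, gammaSum, neg_add', sub_sub]
  ring

theorem prefactor_sub_two {σ : ℂ} (hσ : σ ≠ 2) :
    prefactor (σ - 2) = 2 * (2 - σ) * prefactor σ := by
  have hpow : (2 : ℂ) ^ (-(σ - 2)) = 4 * 2 ^ (-σ) := by
    rw [show -(σ - 2) = 2 + -σ by ring, cpow_add _ _ two_ne_zero, cpow_two]
    norm_num
  have hGamma : Gamma ((2 - (σ - 2)) / 2) = (2 - σ) / 2 * Gamma ((2 - σ) / 2) := by
    rw [show (2 - (σ - 2)) / 2 = (2 - σ) / 2 + 1 by ring, Gamma_add_one]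
    exact div_ne_zero (sub_ne_zero.2 hσ.symm) two_ne_zero
  rw [prefactor, prefactor, hpow, hGamma]
  ring

section IndexShift

variable {α₁ α₂ : ℂ} (hα₁ : α₁ ≠ 1) (hα₂ : α₂ ≠ 1) (hσ₂ : α₁ + α₂ ≠ 2) (hσ₃ : α₁ + α₂ ≠ 3)
include hα₁ hα₂ hσ₂ hσ₃

theorem gammaRatio_sub_one :
    gammaRatio (α₁ - 1) (α₂ - 1) =
      (1 - α₁) * (1 - α₂) / ((3 - α₁ - α₂) * (2 - α₁ - α₂)) * gammaRatio α₁ α₂ := by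
  have hσ : Gamma (2 - (α₁ - 1) - (α₂ - 1)) =
      (3 - α₁ - α₂) * (2 - α₁ - α₂) * Gamma (2 - α₁ - α₂) := by
    rw [show 2 - (α₁ - 1) - (α₂ - 1) = 2 - α₁ - α₂ + 2 by ring,
      Gamma_add_two (by contrapose! hσ₂; linear_combination -hσ₂)
        (by contrapose! hσ₃; linear_combination -hσ₃)]
    ring_nf
  rw [gammaRatio, gammaRatio, Gamma_one_sub_sub_one hα₁, Gamma_one_sub_sub_one hα₂, hσ,
    mul_mul_mul_comm, mul_div_mul_comm]

theorem gammaSum_sub_one :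
    gammaSum (α₁ - 1) (α₂ - 1) =
      -((α₁ - 1) * (α₂ - 1) / ((2 - α₁ - α₂) * (3 - α₁ - α₂))) * gammaSum α₁ α₂ := by
  have hσ : Gamma (α₁ + α₂ - 1) =
      (α₁ + α₂ - 2) * (α₁ + α₂ - 3) * Gamma (α₁ - 1 + (α₂ - 1) - 1) := by
    rw [show α₁ + α₂ - 1 = α₁ - 1 + (α₂ - 1) - 1 + 2 by ring,
      Gamma_add_two (by contrapose! hσ₃; linear_combination hσ₃)
        (by contrapose! hσ₂; linear_combination hσ₂)]
    ring_nf
  have h₂ : 2 - α₁ - α₂ ≠ 0 := by contrapose! hσ₂; linear_combination -hσ₂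
  have h₃ : 3 - α₁ - α₂ ≠ 0 := by contrapose! hσ₃; linear_combination -hσ₃
  have h₁' : α₁ - 1 ≠ 0 := sub_ne_zero.2 hα₁
  have h₂' : α₂ - 1 ≠ 0 := sub_ne_zero.2 hα₂
  rw [gammaSum, gammaSum, Gamma_eq_sub_one_mul hα₁, Gamma_eq_sub_one_mul hα₂, hσ,
    Gamma_one_sub_sub_one hα₁, Gamma_one_sub_sub_one hα₂]
  field_simp
  ring

theorem heatEps_sub_one_sub_one (s : ℂ) :
    heatEps s (α₁ - 1) (α₂ - 1) =
      -(2 * (α₁ - 1) * (α₂ - 1) / (3 - α₁ - α₂)) * heatEps (-s) α₁ α₂ := by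
  have h₂ : 2 - α₁ - α₂ ≠ 0 := by contrapose! hσ₂; linear_combination -hσ₂
  have h₃ : 3 - α₁ - α₂ ≠ 0 := by contrapose! hσ₃; linear_combination -hσ₃
  rw [heatEps_eq, heatEps_eq, show α₁ - 1 + (α₂ - 1) = α₁ + α₂ - 2 by ring,
    prefactor_sub_two hσ₂, gammaRatio_sub_one hα₁ hα₂ hσ₂ hσ₃,
    gammaSum_sub_one hα₁ hα₂ hσ₂ hσ₃]
  field_simp
  ring

end IndexShift

end HeatEps

open HeatEps in
theorem eps_recursion_mixed_index_general (s α₁ α₂ : ℂ)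
    (h12 : ∀ n : ℤ, α₁ + α₂ ≠ (n : ℂ))
    (hα₁ : ∀ n : ℤ, α₁ ≠ (n : ℂ)) (hα₂ : ∀ n : ℤ, α₂ ≠ (n : ℂ)) :
    heatEps s (α₁ - 1) (α₂ - 1) =
      -(2 * (α₁ - 1) * (α₂ - 1) / (3 - α₁ - α₂)) * heatEps (-s) α₁ α₂ :=
  heatEps_sub_one_sub_one (by simpa using hα₁ 1) (by simpa using hα₂ 1)
    (by simpa using h12 2) (by simpa using h12 3) s

theorem eps_recursion_mixed_index (s α₁ α₂ : ℂ) (hs : s = -1 ∨ s = 1)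
    (h1 : α₁.re < 1) (h2 : α₂.re < 1)
    (h12 : ∀ n : ℤ, α₁ + α₂ ≠ (n : ℂ))
    (hα₁ : ∀ n : ℤ, α₁ ≠ (n : ℂ)) (hα₂ : ∀ n : ℤ, α₂ ≠ (n : ℂ)) :
    heatEps s (α₁ - 1) (α₂ - 1) =
      -(2 * (α₁ - 1) * (α₂ - 1) / (3 - α₁ - α₂)) * heatEps (-s) α₁ α₂ :=
  eps_recursion_mixed_index_general s α₁ α₂ h12 hα₁ hα₂
end
end

section
/- Let α₁, α₂ be real numbers with α₁ < 1 and α₂ < 1, and let t > 0. Then the double integral ∫₀^∞ ∫₀^∞ e^{−(x+y)²/(4t)} x^{−α₁} y^{−α₂} dx dy converges and equals 2^{1−α₁−α₂} · Γ((2−α₁−α₂)/2) · (Γ(1−α₁)Γ(1−α₂)/Γ(2−α₁−α₂)) · t^{(2−α₁−α₂)/2}. -/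
open MeasureTheory Set Real

/-!
The shear `(x, y) ↦ (x + y, y)` preserves Lebesgue measure and maps the quadrant onto
`{0 < y < s}`. For fixed `s = x + y` the integral over `y` is the scaled Beta integral
`s ^ (a + b - 1) * B(a, b)`, so any integrand `g (x + y) x ^ (a - 1) y ^ (b - 1)` reduces to the
one-dimensional moment `B(a, b) ∫₀^∞ g(s) s ^ (a + b - 1) ds`. For the heat kernel
`g(s) = exp (-s² / 4t)` this moment is a Gamma integral.
-/

section Beta

variable {a b : ℝ}

theorem integrableOn_rpow_mul_sub_rpow (ha : 0 < a) (hb : 0 < b) (s : ℝ) :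
    IntegrableOn (fun x => x ^ (a - 1) * (s - x) ^ (b - 1)) (Ioo 0 s) := by
  rcases le_or_gt s 0 with hs | hs
  · simp [Ioo_eq_empty_of_le hs]
  have hpow {c : ℝ} (hc : 0 < c) (u v : ℝ) :
      IntervalIntegrable (fun x : ℝ => x ^ (c - 1)) volume u v :=
    intervalIntegral.intervalIntegrable_rpow' (by linarith)
  have left : IntervalIntegrable (fun x => x ^ (a - 1) * (s - x) ^ (b - 1)) volume 0 (s / 2) := by
    refine (hpow ha _ _).mul_continuousOn (ContinuousOn.rpow_const (by fun_prop) fun x hx => ?_)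
    rw [uIcc_of_le (by positivity)] at hx
    exact Or.inl (by linarith [hx.2])
  have right : IntervalIntegrable (fun x => x ^ (a - 1) * (s - x) ^ (b - 1)) volume (s / 2) s := by
    have h := ((hpow hb 0 (s / 2)).comp_sub_left s).symm
    rw [sub_zero, sub_half] at h
    refine h.continuousOn_mul (ContinuousOn.rpow_const (by fun_prop) fun x hx => ?_)
    rw [uIcc_of_le (by linarith)] at hx
    exact Or.inl (by linarith [hx.1])
  exact ((intervalIntegrable_iff_integrableOn_Ioc_of_le hs.le).1 (left.trans right)).mono_set
    Ioo_subset_Ioc_self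

theorem integral_Ioo_rpow_mul_sub_rpow (ha : 0 < a) (hb : 0 < b) {s : ℝ} (hs : 0 < s) :
    ∫ x in Ioo 0 s, x ^ (a - 1) * (s - x) ^ (b - 1) =
      s ^ (a + b - 1) * (Gamma a * Gamma b / Gamma (a + b)) := by
  have hbeta := Complex.betaIntegral_scaled a b hs
  rw [Complex.betaIntegral_eq_Gamma_mul_div _ _ (by simpa) (by simpa)] at hbeta
  apply Complex.ofReal_injective
  rw [← integral_Ioc_eq_integral_Ioo, ← intervalIntegral.integral_of_le hs.le,
    ← intervalIntegral.integral_ofReal, Complex.ofReal_mul, Complex.ofReal_cpow hs.le,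
    Complex.ofReal_div, Complex.ofReal_mul,
    ← Complex.Gamma_ofReal, ← Complex.Gamma_ofReal, ← Complex.Gamma_ofReal]
  push_cast
  rw [← hbeta]
  refine intervalIntegral.integral_congr fun x hx => ?_
  rw [uIcc_of_le hs.le] at hx
  simp only [Complex.ofReal_cpow hx.1, Complex.ofReal_cpow (sub_nonneg.2 hx.2)]
  push_cast
  rfl

end Beta

section Shear

variable {g : ℝ → ℝ} {a b : ℝ}

/-- `g (x + y) * x ^ (a - 1) * y ^ (b - 1)` in the coordinates `(s, y) = (x + y, y)`. -/
noncomputable def shearedIntegrand (g : ℝ → ℝ) (a b : ℝ) (p : ℝ × ℝ) : ℝ :=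
  (Ioo 0 p.1).indicator (fun y => g p.1 * (p.1 - y) ^ (a - 1) * y ^ (b - 1)) p.2

theorem shearedIntegrand_comp_add_prod :
    shearedIntegrand g a b ∘ (fun p => (p.1 + p.2, p.2)) =
      (Ioi 0 ×ˢ Ioi 0).indicator (fun p => g (p.1 + p.2) * p.1 ^ (a - 1) * p.2 ^ (b - 1)) := by
  ext ⟨x, y⟩
  have hmem : y ∈ Ioo 0 (x + y) ↔ (x, y) ∈ Ioi (0 : ℝ) ×ˢ Ioi 0 := by
    simp only [mem_Ioo, mem_prod, mem_Ioi]
    constructor <;> rintro ⟨h₁, h₂⟩ <;> constructor <;> linarith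
  simp only [Function.comp_apply, shearedIntegrand, indicator, hmem, add_sub_cancel_right]

theorem measurable_shearedIntegrand (hg : Measurable g) : Measurable (shearedIntegrand g a b) := by
  have hset : MeasurableSet {p : ℝ × ℝ | p.2 ∈ Ioo 0 p.1} :=
    (measurableSet_lt measurable_const measurable_snd).inter
      (measurableSet_lt measurable_snd measurable_fst)
  exact Measurable.indicator (by fun_prop) hset

theorem norm_shearedIntegrand (p : ℝ × ℝ) :
    ‖shearedIntegrand g a b p‖ = shearedIntegrand (fun s => |g s|) a b p := by
  by_cases hp : p.2 ∈ Ioo 0 p.1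
  · have : 0 < p.1 - p.2 := sub_pos.2 hp.2
    simp only [shearedIntegrand, indicator_of_mem hp, norm_mul, norm_eq_abs,
      abs_of_pos (rpow_pos_of_pos this _), abs_of_pos (rpow_pos_of_pos hp.1 _)]
  · simp [shearedIntegrand, indicator_of_notMem hp]

theorem shearedIntegrand_slice (s : ℝ) :
    (fun y => shearedIntegrand g a b (s, y)) =
      (Ioo 0 s).indicator (fun y => g s * (y ^ (b - 1) * (s - y) ^ (a - 1))) := by
  ext y
  simp only [shearedIntegrand]
  congr 1
  ext z
  ring

theorem integrable_shearedIntegrand_slice (ha : 0 < a) (hb : 0 < b) (s : ℝ) :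
    Integrable (fun y => shearedIntegrand g a b (s, y)) := by
  rw [shearedIntegrand_slice, integrable_indicator_iff measurableSet_Ioo]
  exact (integrableOn_rpow_mul_sub_rpow hb ha s).const_mul (g s)

theorem integral_shearedIntegrand_slice (ha : 0 < a) (hb : 0 < b) (s : ℝ) :
    ∫ y, shearedIntegrand g a b (s, y) =
      (Ioi 0).indicator
        (fun s => Gamma a * Gamma b / Gamma (a + b) * (g s * s ^ (a + b - 1))) s := by
  rw [shearedIntegrand_slice, integral_indicator measurableSet_Ioo]
  rcases le_or_gt s 0 with hs | hs
  · rw [indicator_of_notMem (show s ∉ Ioi 0 from not_lt.2 hs), Ioo_eq_empty_of_le hs,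
      Measure.restrict_empty, integral_zero_measure]
  · rw [indicator_of_mem (show s ∈ Ioi 0 from hs), integral_const_mul,
      integral_Ioo_rpow_mul_sub_rpow hb ha hs, add_comm b, mul_comm (Gamma b)]
    ring

theorem integrable_shearedIntegrand (hg : Measurable g) (ha : 0 < a) (hb : 0 < b)
    (hint : IntegrableOn (fun s => g s * s ^ (a + b - 1)) (Ioi 0)) :
    Integrable (shearedIntegrand g a b) := by
  rw [Measure.volume_eq_prod,
    integrable_prod_iff (measurable_shearedIntegrand hg).aestronglyMeasurable]
  refine ⟨.of_forall (integrable_shearedIntegrand_slice ha hb), ?_⟩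
  simp_rw [norm_shearedIntegrand, integral_shearedIntegrand_slice ha hb]
  refine (integrable_indicator_iff measurableSet_Ioi).2 <|
    IntegrableOn.congr_fun (hint.norm.const_mul (Gamma a * Gamma b / Gamma (a + b)))
      (fun s hs => ?_) measurableSet_Ioi
  rw [norm_mul, norm_eq_abs, norm_eq_abs, abs_of_pos (rpow_pos_of_pos hs _)]

theorem integral_shearedIntegrand (hg : Measurable g) (ha : 0 < a) (hb : 0 < b)
    (hint : IntegrableOn (fun s => g s * s ^ (a + b - 1)) (Ioi 0)) :
    ∫ p, shearedIntegrand g a b p =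
      Gamma a * Gamma b / Gamma (a + b) * ∫ s in Ioi 0, g s * s ^ (a + b - 1) := by
  rw [Measure.volume_eq_prod, integral_prod _ (integrable_shearedIntegrand hg ha hb hint)]
  simp_rw [integral_shearedIntegrand_slice ha hb]
  rw [integral_indicator measurableSet_Ioi, integral_const_mul]

theorem integrableOn_Ioi_prod_Ioi_comp_add (hg : Measurable g) (ha : 0 < a) (hb : 0 < b)
    (hint : IntegrableOn (fun s => g s * s ^ (a + b - 1)) (Ioi 0)) :
    IntegrableOn (fun p : ℝ × ℝ => g (p.1 + p.2) * p.1 ^ (a - 1) * p.2 ^ (b - 1))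
      (Ioi 0 ×ˢ Ioi 0) := by
  rw [← integrable_indicator_iff (measurableSet_Ioi.prod measurableSet_Ioi),
    ← shearedIntegrand_comp_add_prod]
  exact (measurePreserving_add_prod volume volume).integrable_comp_of_integrable
    (integrable_shearedIntegrand hg ha hb hint)

theorem integral_Ioi_prod_Ioi_comp_add (hg : Measurable g) (ha : 0 < a) (hb : 0 < b)
    (hint : IntegrableOn (fun s => g s * s ^ (a + b - 1)) (Ioi 0)) :
    ∫ p in Ioi 0 ×ˢ Ioi 0, g (p.1 + p.2) * p.1 ^ (a - 1) * p.2 ^ (b - 1) =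
      Gamma a * Gamma b / Gamma (a + b) * ∫ s in Ioi 0, g s * s ^ (a + b - 1) := by
  rw [← integral_indicator (measurableSet_Ioi.prod measurableSet_Ioi),
    ← shearedIntegrand_comp_add_prod, ← integral_shearedIntegrand hg ha hb hint]
  have hshear : MeasurePreserving (fun p : ℝ × ℝ => (p.1 + p.2, p.2)) :=
    measurePreserving_add_prod volume volume
  conv_rhs => rw [← hshear.map_eq]
  exact (integral_map hshear.measurable.aemeasurable
    (measurable_shearedIntegrand hg).aestronglyMeasurable).symm

end Shear

section HeatKernel

variable {q t : ℝ}

theorem exp_neg_sq_div_mul_rpow_eq (t q s : ℝ) :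
    exp (-s ^ 2 / (4 * t)) * s ^ q = s ^ q * exp (-(4 * t)⁻¹ * s ^ (2 : ℝ)) := by
  rw [mul_comm, rpow_two, neg_mul, inv_mul_eq_div, neg_div]

theorem integrableOn_exp_neg_sq_div_mul_rpow (hq : -1 < q) (ht : 0 < t) :
    IntegrableOn (fun s => exp (-s ^ 2 / (4 * t)) * s ^ q) (Ioi 0) := by
  simpa only [exp_neg_sq_div_mul_rpow_eq] using
    integrableOn_rpow_mul_exp_neg_mul_rpow hq two_pos (inv_pos.2 (by positivity : 0 < 4 * t))

theorem integral_exp_neg_sq_div_mul_rpow (hq : -1 < q) (ht : 0 < t) :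
    ∫ s in Ioi 0, exp (-s ^ 2 / (4 * t)) * s ^ q =
      2 ^ q * Gamma ((q + 1) / 2) * t ^ ((q + 1) / 2) := by
  have h4 : (4 : ℝ) ^ ((q + 1) / 2) = 2 ^ q * 2 := by
    rw [show (4 : ℝ) = 2 ^ (2 : ℕ) by norm_num, ← rpow_natCast_mul zero_le_two,
      ← rpow_add_one two_ne_zero]
    ring_nf
  simp_rw [exp_neg_sq_div_mul_rpow_eq]
  rw [integral_rpow_mul_exp_neg_mul_rpow two_pos hq (inv_pos.2 (by positivity)),
    inv_rpow (by positivity), neg_div, rpow_neg (by positivity), inv_inv,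
    mul_rpow zero_le_four ht.le, h4]
  ring

end HeatKernel

theorem halfLine_neumann_dirichlet_integral (α₁ α₂ : ℝ) (h1 : α₁ < 1) (h2 : α₂ < 1)
    (t : ℝ) (ht : 0 < t) :
    IntegrableOn
      (fun p : ℝ × ℝ => Real.exp (-(p.1 + p.2) ^ 2 / (4 * t)) * p.1 ^ (-α₁) * p.2 ^ (-α₂))
      (Ioi 0 ×ˢ Ioi 0) ∧
    ∫ p in Ioi (0 : ℝ) ×ˢ Ioi (0 : ℝ),
        Real.exp (-(p.1 + p.2) ^ 2 / (4 * t)) * p.1 ^ (-α₁) * p.2 ^ (-α₂) =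
      2 ^ (1 - α₁ - α₂) * Real.Gamma ((2 - α₁ - α₂) / 2) *
        (Real.Gamma (1 - α₁) * Real.Gamma (1 - α₂) / Real.Gamma (2 - α₁ - α₂)) *
        t ^ ((2 - α₁ - α₂) / 2) := by
  have ha : 0 < 1 - α₁ := by linarith
  have hb : 0 < 1 - α₂ := by linarith
  have hg : Measurable fun s : ℝ => exp (-s ^ 2 / (4 * t)) := by fun_prop
  have hab : 1 - α₁ + (1 - α₂) - 1 = 1 - α₁ - α₂ := by ring
  have hint := integrableOn_exp_neg_sq_div_mul_rpow (q := 1 - α₁ - α₂) (by linarith) ht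
  rw [← hab] at hint
  have hmoment := integral_exp_neg_sq_div_mul_rpow (q := 1 - α₁ - α₂) (by linarith) ht
  constructor
  · simpa only [sub_sub_cancel_left] using integrableOn_Ioi_prod_Ioi_comp_add hg ha hb hint
  · have h := integral_Ioi_prod_Ioi_comp_add hg ha hb hint
    simp only [sub_sub_cancel_left, hab, hmoment] at h
    rw [h, show 1 - α₁ + (1 - α₂) = 2 - α₁ - α₂ by ring,
      show 1 - α₁ - α₂ + 1 = 2 - α₁ - α₂ by ring]
    ring
end
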